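/- arXiv:2106.10998 — 2 statements merged into one kernel-verified Lean document; each statement's English description precedes it below -/
import Mathlib

section
/- Let R = ℂ⟦X,Y⟧ be the formal power series ring in two variables over ℂ. If l, n ∈ R both have zero constant coefficient and l·n = X·(X² + Y³), then the quotient ℂ-vector space R / Ideal.span {l, n} has dimension 3. -/
/-!
Since `X` is prime, it divides one of `l, n`, say `l = X * u`, and then `u * n = X² + Y³`.
The cusp `X² + Y³` is irreducible: if both factors vanished at the origin, comparing quadratic
parts would force their linear parts to be multiples of `X`, so both would have order `≥ 2`
for the weights `(2, 1)`, whereas `X² + Y³` has weighted order `3`. Hence `u` is a unit and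
`⟨l, n⟩ = ⟨X, X² + Y³⟩ = ⟨X, Y³⟩`, whose quotient has basis `1, Y, Y²`.
-/

open MvPowerSeries

theorem Finsupp.fin_two_eq_single_add_single (d : Fin 2 →₀ ℕ) :
    d = single 0 (d 0) + single 1 (d 1) := by
  ext i
  fin_cases i <;> simp

namespace MvPowerSeries

instance {σ R : Type*} [CommRing R] [IsDomain R] : IsDomain (MvPowerSeries σ R) :=
  NoZeroDivisors.to_isDomain _

theorem prime_X_zero {R : Type*} [CommRing R] [IsDomain R] {n : ℕ} :
    Prime (X 0 : MvPowerSeries (Fin (n + 1)) R) := by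
  rw [← MulEquiv.prime_iff (finSuccEquiv R n), finSuccEquiv_X_zero]
  exact PowerSeries.X_prime

section CommSemiring

variable {R : Type*} [CommSemiring R]

theorem homogeneousComponent_one_fin_two (f : MvPowerSeries (Fin 2) R) :
    homogeneousComponent 1 f =
      C (coeff (Finsupp.single 0 1) f) * X 0 + C (coeff (Finsupp.single 1 1) f) * X 1 := by
  ext d
  rw [d.fin_two_eq_single_add_single, coeff_homogeneousComponent]
  generalize d 0 = i, d 1 = j
  simp only [map_add, Finsupp.degree_single, coeff_C_mul, coeff_X, Finsupp.ext_iff,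
    Finsupp.coe_add, Pi.add_apply, Fin.forall_fin_two, Finsupp.single_apply]
  split_ifs <;> simp_all
  omega

theorem homogeneousComponent_two_X_zero_sq_add_X_one_pow_three :
    homogeneousComponent 2 (X 0 ^ 2 + X 1 ^ 3 : MvPowerSeries (Fin 2) R) = X 0 ^ 2 := by
  ext d
  simp only [coeff_homogeneousComponent, map_add, coeff_X_pow]
  split_ifs <;> subst_vars <;> simp_all

theorem two_le_weightedOrder_of_coeff_eq_zero {f : MvPowerSeries (Fin 2) R}
    (hf : constantCoeff f = 0) (hf1 : coeff (Finsupp.single 1 1) f = 0) :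
    2 ≤ weightedOrder ![2, 1] f := by
  refine nat_le_weightedOrder _ fun d hd => ?_
  rw [d.fin_two_eq_single_add_single] at hd ⊢
  generalize d 0 = i, d 1 = j at hd ⊢
  simp only [map_add, Finsupp.weight_single, smul_eq_mul] at hd
  rcases (by simp at hd; omega : i = 0 ∧ (j = 0 ∨ j = 1)) with ⟨rfl, rfl | rfl⟩ <;> simpa

theorem weightedOrder_X_zero_sq_add_X_one_pow_three_le [Nontrivial R] :
    weightedOrder ![2, 1] (X 0 ^ 2 + X 1 ^ 3 : MvPowerSeries (Fin 2) R) ≤ 3 := by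
  refine (weightedOrder_le ![2, 1] (d := Finsupp.single 1 3) ?_).trans ?_
  · simp [coeff_X_pow, Finsupp.single_eq_single_iff]
  · simp [Finsupp.weight_apply]

end CommSemiring

section CommRing

variable {R : Type*} [CommRing R]

theorem eq_zero_of_linear_mul_linear_eq_X_zero_sq [IsDomain R] {a b c d : R}
    (h : (C a * X 0 + C b * X 1) * (C c * X 0 + C d * X 1) =
      (X 0 ^ 2 : MvPowerSeries (Fin 2) R)) :
    b = 0 ∧ d = 0 := by
  have hpoly : (MvPolynomial.C a * MvPolynomial.X 0 + MvPolynomial.C b * MvPolynomial.X 1) *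
      (MvPolynomial.C c * MvPolynomial.X 0 + MvPolynomial.C d * MvPolynomial.X 1) =
      (MvPolynomial.X 0 ^ 2 : MvPolynomial (Fin 2) R) := by
    rw [← MvPolynomial.coe_inj]
    push_cast
    exact h
  have hac : a * c = 1 := by simpa using congrArg (MvPolynomial.eval ![1, 0]) hpoly
  have hbd : b * d = 0 := by simpa using congrArg (MvPolynomial.eval ![0, 1]) hpoly
  have hsum : (a + b) * (c + d) = 1 := by simpa using congrArg (MvPolynomial.eval ![1, 1]) hpoly
  rcases mul_eq_zero.mp hbd with rfl | rfl
  · exact ⟨rfl, (mul_eq_zero.mp (by linear_combination hsum - hac)).resolve_left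
      (left_ne_zero_of_mul_eq_one hac)⟩
  · exact ⟨(mul_eq_zero.mp (by linear_combination hsum - hac)).resolve_right
      (right_ne_zero_of_mul_eq_one hac), rfl⟩

theorem mem_span_X_zero_X_one_pow_iff {k : ℕ} {f : MvPowerSeries (Fin 2) R} :
    f ∈ Ideal.span {X 0, X 1 ^ k} ↔ ∀ j < k, coeff (Finsupp.single 1 j) f = 0 := by
  constructor
  · rintro hf j hj
    obtain ⟨p, q, rfl⟩ := Ideal.mem_span_pair.mp hf
    rw [map_add, X_dvd_iff.mp (dvd_mul_left _ p) _ (by simp),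
      X_pow_dvd_iff.mp (dvd_mul_left _ q) _ (by simpa), add_zero]
  · intro hf
    let g : MvPowerSeries (Fin 2) R := fun m => if m 0 = 0 then coeff m f else 0
    have hg (m) : coeff m g = if m 0 = 0 then coeff m f else 0 := rfl
    obtain ⟨p, hp⟩ : X 0 ∣ f - g := X_dvd_iff.mpr fun m hm => by
      rw [map_sub, hg, if_pos hm, sub_self]
    obtain ⟨q, hq⟩ : X 1 ^ k ∣ g := X_pow_dvd_iff.mpr fun m hm => by
      rw [hg]
      split_ifs with h0
      · rw [m.fin_two_eq_single_add_single, h0, Finsupp.single_zero, zero_add]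
        exact hf _ hm
      · rfl
    exact Ideal.mem_span_pair.mpr
      ⟨p, q, by rw [mul_comm p, mul_comm q, ← hp, ← hq, sub_add_cancel]⟩

end CommRing

variable {K : Type*} [Field K]

theorem irreducible_X_zero_sq_add_X_one_pow_three :
    Irreducible (X 0 ^ 2 + X 1 ^ 3 : MvPowerSeries (Fin 2) K) := by
  refine ⟨by simp [isUnit_iff_constantCoeff], fun u n h => ?_⟩
  by_contra! hun
  simp only [isUnit_iff_constantCoeff, isUnit_iff_ne_zero, ne_eq, not_not] at hun
  obtain ⟨hu, hn⟩ := hun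
  have hlinear : homogeneousComponent 1 u * homogeneousComponent 1 n = X 0 ^ 2 := by
    rw [← homogeneousComponent_mul_of_le_order (one_le_order_iff_constCoeff_eq_zero.mpr hu)
      (one_le_order_iff_constCoeff_eq_zero.mpr hn), ← h, one_add_one_eq_two,
      homogeneousComponent_two_X_zero_sq_add_X_one_pow_three]
  rw [homogeneousComponent_one_fin_two, homogeneousComponent_one_fin_two] at hlinear
  obtain ⟨hu1, hn1⟩ := eq_zero_of_linear_mul_linear_eq_X_zero_sq hlinear
  have hle : 2 + 2 ≤ weightedOrder ![2, 1] (X 0 ^ 2 + X 1 ^ 3 : MvPowerSeries (Fin 2) K) := by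
    rw [h, weightedOrder_mul]
    exact add_le_add (two_le_weightedOrder_of_coeff_eq_zero hu hu1)
      (two_le_weightedOrder_of_coeff_eq_zero hn hn1)
  have := hle.trans weightedOrder_X_zero_sq_add_X_one_pow_three_le
  norm_num at this

theorem finrank_quotient_span_X_zero_X_one_pow (k : ℕ) :
    Module.finrank K
      (MvPowerSeries (Fin 2) K ⧸ Ideal.span {(X 0 : MvPowerSeries (Fin 2) K), X 1 ^ k}) = k := by
  let φ : MvPowerSeries (Fin 2) K →ₗ[K] (Fin k → K) :=
    LinearMap.pi fun j => coeff (Finsupp.single 1 (j : ℕ))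
  have hker : LinearMap.ker φ = (Ideal.span {X 0, X 1 ^ k}).restrictScalars K := by
    ext f
    simp [φ, funext_iff, mem_span_X_zero_X_one_pow_iff, Fin.forall_iff]
  have hφ : Function.Surjective φ := fun v => by
    refine ⟨∑ j : Fin k, monomial (Finsupp.single 1 (j : ℕ)) (v j), funext fun i => ?_⟩
    simp [φ, coeff_monomial, (Finsupp.single_injective _).eq_iff, Fin.val_inj]
  rw [((Submodule.Quotient.restrictScalarsEquiv K _).symm ≪≫ₗ
    Submodule.quotEquivOfEq _ _ hker.symm ≪≫ₗ φ.quotKerEquivOfSurjective hφ).finrank_eq,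
    Module.finrank_fin_fun]

theorem span_pair_eq_span_X_zero_X_one_pow_three {l n : MvPowerSeries (Fin 2) K}
    (hn : constantCoeff n = 0) (hln : l * n = X 0 * (X 0 ^ 2 + X 1 ^ 3)) (hl : X 0 ∣ l) :
    Ideal.span {l, n} = Ideal.span {X 0, X 1 ^ 3} := by
  obtain ⟨u, rfl⟩ := hl
  have hun : u * n = X 0 ^ 2 + X 1 ^ 3 :=
    mul_left_cancel₀ prime_X_zero.ne_zero (by rw [← mul_assoc, hln])
  have hu : IsUnit u := (irreducible_X_zero_sq_add_X_one_pow_three.isUnit_or_isUnit hun.symm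
    ).resolve_right (by simp [isUnit_iff_constantCoeff, hn])
  obtain ⟨w, hw⟩ := hu.exists_right_inv
  have hnw : n = (X 1 ^ 3 + X 0 * X 0) * w := by
    rw [← mul_one n, ← hw, ← mul_assoc, mul_comm n, hun]
    ring
  rw [Ideal.span_insert, Ideal.span_singleton_mul_right_unit hu, hnw,
    Ideal.span_singleton_mul_right_unit (.of_mul_eq_one_right u hw), ← Ideal.span_insert,
    Ideal.span_pair_add_mul_left]

end MvPowerSeries

/-- Theorem 3.14(2), case `E₇`: if `l·n = X·(X² + Y³)` in `ℂ⟦X,Y⟧`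
with `l, n` vanishing at the origin, then `dim_ℂ ℂ⟦X,Y⟧/⟨l,n⟩ = 3`. -/
theorem stmt7 (l n : MvPowerSeries (Fin 2) ℂ)
    (hl : constantCoeff l = 0)
    (hn : constantCoeff n = 0)
    (hln : l * n = X 0 * ((X 0) ^ 2 + (X 1) ^ 3)) :
    Module.finrank ℂ (MvPowerSeries (Fin 2) ℂ ⧸ Ideal.span {l, n}) = 3 := by
  rcases prime_X_zero.dvd_or_dvd ⟨_, hln⟩ with h | h
  · rw [span_pair_eq_span_X_zero_X_one_pow_three hn hln h,
      finrank_quotient_span_X_zero_X_one_pow]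
  · rw [Ideal.span_pair_comm, span_pair_eq_span_X_zero_X_one_pow_three hl
      (by rwa [mul_comm]) h, finrank_quotient_span_X_zero_X_one_pow]
end

section
/- Let R = ℂ⟦X,Y⟧ be the formal power series ring in two variables over ℂ and let k ≥ 2 be an integer. If l, n ∈ R both have zero constant coefficient and l·n = Y·(X² − Y^{2k−2}), then the dimension of the quotient ℂ-vector space R / Ideal.span {l, n} equals 2 or equals k. -/
/-!
Write `X = X 0` and `Y = X 1`. The factors `Y`, `X - Y ^ (k - 1)` and `X + Y ^ (k - 1)` of
`Y * (X ^ 2 - Y ^ (2 * k - 2))` are prime: `Y` is a coordinate, and `X ± Y ^ (k - 1)` is the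
image of the coordinate `X` under the shear automorphism `X ↦ X ± Y ^ (k - 1)`, `Y ↦ Y`.
As `l` and `n` are non-units, unique factorization forces `⟨l, n⟩` to be generated by one prime
factor and the product of the other two. This is `⟨Y, X ^ 2⟩`, of colength `2`, or
`⟨X ∓ Y ^ (k - 1), Y ^ k⟩`, which the shear carries to `⟨X, Y ^ k⟩`, of colength `k`.
-/

open MvPowerSeries

section Factorization

variable {A : Type*} [CommMonoidWithZero A] [IsCancelMulZero A]

theorem associated_of_mul_eq_mul_of_dvd {a b q r : A} (hq : q ≠ 0) (hr : Irreducible r)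
    (hb : ¬IsUnit b) (h : a * b = q * r) (hqa : q ∣ a) : Associated a q ∧ Associated b r := by
  obtain ⟨a', rfl⟩ := hqa
  have h' : a' * b = r := mul_left_cancel₀ hq (by rw [← h, mul_assoc])
  have ha' : IsUnit a' := (hr.isUnit_or_isUnit h'.symm).resolve_right hb
  exact ⟨(associated_mul_unit_right q a' ha').symm,
    h' ▸ (associated_unit_mul_left b a' ha').symm⟩

theorem associated_of_mul_eq_prime_mul_irreducible {a b q r : A} (hq : Prime q)
    (hr : Irreducible r) (ha : ¬IsUnit a) (hb : ¬IsUnit b) (h : a * b = q * r) :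
    (Associated a q ∧ Associated b r) ∨ (Associated a r ∧ Associated b q) := by
  rcases hq.dvd_or_dvd ⟨r, h⟩ with hqa | hqb
  · exact .inl (associated_of_mul_eq_mul_of_dvd hq.ne_zero hr hb h hqa)
  · obtain ⟨hbq, har⟩ :=
      associated_of_mul_eq_mul_of_dvd hq.ne_zero hr ha (by rw [mul_comm, h]) hqb
    exact .inr ⟨har, hbq⟩

end Factorization

namespace Ideal

variable {A : Type*} [CommRing A] [IsDomain A]

theorem span_pair_eq_of_associated {a b a' b' : A} (ha : Associated a a')
    (hb : Associated b b') : span {a, b} = span {a', b'} := by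
  rw [span_insert, span_insert, span_singleton_eq_span_singleton.2 ha,
    span_singleton_eq_span_singleton.2 hb]

theorem span_pair_eq_of_mul_eq_prime_mul_prime_mul_irreducible {l n p q r : A} (hp : Prime p)
    (hq : Prime q) (hr : Irreducible r) (hl : ¬IsUnit l) (hn : ¬IsUnit n)
    (h : l * n = p * (q * r)) :
    span {l, n} = span {p, q * r} ∨ span {l, n} = span {q, p * r} ∨
      span {l, n} = span {r, p * q} := by
  wlog hpl : p ∣ l generalizing l n
  · rw [span_pair_comm]
    exact this hn hl (by rw [mul_comm, h]) ((hp.dvd_or_dvd ⟨_, h⟩).resolve_left hpl)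
  obtain ⟨l', rfl⟩ := hpl
  have h' : l' * n = q * r := mul_left_cancel₀ hp.ne_zero (by rw [← mul_assoc, h])
  by_cases hl' : IsUnit l'
  · exact .inl (span_pair_eq_of_associated (associated_mul_unit_right p l' hl').symm
      (h' ▸ (associated_unit_mul_left n l' hl').symm))
  · rcases associated_of_mul_eq_prime_mul_irreducible hq hr hl' hn h' with
      ⟨hq', hr'⟩ | ⟨hr', hq'⟩
    · exact .inr (.inr (span_pair_comm.trans (span_pair_eq_of_associated hr' (hq'.mul_left p))))
    · exact .inr (.inl (span_pair_comm.trans (span_pair_eq_of_associated hq' (hr'.mul_left p))))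

end Ideal

theorem Finsupp.fin_two_eq_single_of_apply_eq_zero {i j : Fin 2} (hij : i ≠ j)
    {d : Fin 2 →₀ ℕ} (hd : d i = 0) : d = Finsupp.single j (d j) := by
  ext x
  fin_cases i <;> fin_cases j <;> fin_cases x <;> simp_all

namespace MvPowerSeries

variable {R : Type*} [CommRing R]

instance {σ : Type*} [IsDomain R] : IsDomain (MvPowerSeries σ R) := NoZeroDivisors.to_isDomain _

theorem X_prime {n : ℕ} [IsDomain R] (i : Fin (n + 1)) :
    Prime (X i : MvPowerSeries (Fin (n + 1)) R) := by
  have h0 : Prime (X 0 : MvPowerSeries (Fin (n + 1)) R) := by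
    rw [← MulEquiv.prime_iff (finSuccEquiv R n), finSuccEquiv_X_zero]
    exact PowerSeries.X_prime
  rw [← MulEquiv.prime_iff (renameEquiv R (Equiv.swap 0 i)).symm]
  simpa [renameEquiv_symm] using h0

theorem mem_span_X_X_pow_iff {i j : Fin 2} (hij : i ≠ j) {m : ℕ} {f : MvPowerSeries (Fin 2) R} :
    f ∈ Ideal.span {X i, X j ^ m} ↔ ∀ r < m, coeff (Finsupp.single j r) f = 0 := by
  constructor
  · rintro hf r hr
    obtain ⟨a, b, rfl⟩ := Ideal.mem_span_pair.1 hf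
    rw [map_add, X_dvd_iff.1 (dvd_mul_left _ _) _ (Finsupp.single_eq_of_ne hij),
      X_pow_dvd_iff.1 (dvd_mul_left _ _) _ (by simpa using hr), add_zero]
  · intro hf
    let g : MvPowerSeries (Fin 2) R := fun d => if d i = 0 then coeff d f else 0
    have hg : ∀ d, coeff d g = if d i = 0 then coeff d f else 0 := fun _ => rfl
    obtain ⟨a, ha⟩ : X i ∣ f - g := X_dvd_iff.2 fun d hd => by simp [hg, hd]
    obtain ⟨b, hb⟩ : X j ^ m ∣ g := X_pow_dvd_iff.2 fun d hd => by
      rw [hg]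
      split_ifs with hdi
      · rw [Finsupp.fin_two_eq_single_of_apply_eq_zero hij hdi]
        exact hf _ hd
      · rfl
    exact Ideal.mem_span_pair.2 ⟨a, b, by linear_combination -ha - hb⟩

theorem finrank_quotient_span_X_X_pow {K : Type*} [Field K] {i j : Fin 2} (hij : i ≠ j)
    (m : ℕ) :
    Module.finrank K
      (MvPowerSeries (Fin 2) K ⧸ Ideal.span {(X i : MvPowerSeries (Fin 2) K), X j ^ m}) = m := by
  let T : MvPowerSeries (Fin 2) K →ₗ[K] Fin m → K :=
    LinearMap.pi fun r => coeff (R := K) (Finsupp.single j (r : ℕ))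
  have hker : LinearMap.ker T = (Ideal.span {X i, X j ^ m}).restrictScalars K := by
    ext f
    simp [T, mem_span_X_X_pow_iff hij, funext_iff, Fin.forall_iff]
  have hT : Function.Surjective T := fun v => by
    refine ⟨∑ r : Fin m, monomial (Finsupp.single j (r : ℕ)) (v r), funext fun r => ?_⟩
    simp [T, coeff_monomial, (Finsupp.single_injective j).eq_iff, Fin.val_inj]
  calc Module.finrank K (MvPowerSeries (Fin 2) K ⧸ Ideal.span {X i, X j ^ m})
      = Module.finrank K (MvPowerSeries (Fin 2) K ⧸ LinearMap.ker T) := by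
        rw [hker]
        exact (Submodule.Quotient.restrictScalarsEquiv K _).symm.finrank_eq
    _ = m := by rw [(T.quotKerEquivOfSurjective hT).finrank_eq, Module.finrank_fin_fun]

-- The exponent is `d + 1` so that the substituted series have no constant term.
noncomputable def shearSubst (c : R) (d : ℕ) : Fin 2 → MvPowerSeries (Fin 2) R :=
  ![X 0 + C c * X 1 ^ (d + 1), X 1]

theorem hasSubst_shearSubst (c : R) (d : ℕ) : HasSubst (shearSubst c d) :=
  hasSubst_of_constantCoeff_zero fun i => by fin_cases i <;> simp [shearSubst]

theorem subst_shearSubst_X_zero (c : R) (d : ℕ) :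
    subst (shearSubst c d) (X 0 : MvPowerSeries (Fin 2) R) = X 0 + C c * X 1 ^ (d + 1) :=
  subst_X (hasSubst_shearSubst c d) 0

theorem subst_shearSubst_X_one (c : R) (d : ℕ) :
    subst (shearSubst c d) (X 1 : MvPowerSeries (Fin 2) R) = X 1 :=
  subst_X (hasSubst_shearSubst c d) 1

theorem subst_shearSubst_subst_shearSubst_neg (c : R) (d : ℕ) (f : MvPowerSeries (Fin 2) R) :
    subst (shearSubst c d) (subst (shearSubst (-c) d) f) = f := by
  have hs := hasSubst_shearSubst c d
  have hX : (fun i => subst (shearSubst c d) (shearSubst (-c) d i)) = X := by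
    ext1 i
    fin_cases i
    · change subst (shearSubst c d) (X 0 + C (-c) * X 1 ^ (d + 1)) = X 0
      rw [subst_add hs, subst_mul hs, subst_pow hs, subst_shearSubst_X_zero,
        subst_shearSubst_X_one, subst_C, map_neg]
      ring
    · exact subst_shearSubst_X_one c d
  rw [subst_comp_subst_apply (hasSubst_shearSubst _ _) hs, hX, subst_self, id]

noncomputable def shear (c : R) (d : ℕ) :
    MvPowerSeries (Fin 2) R ≃ₐ[R] MvPowerSeries (Fin 2) R :=
  AlgEquiv.ofAlgHom (substAlgHom (hasSubst_shearSubst c d))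
    (substAlgHom (hasSubst_shearSubst (-c) d))
    (AlgHom.ext fun f => by simpa using subst_shearSubst_subst_shearSubst_neg c d f)
    (AlgHom.ext fun f => by simpa using subst_shearSubst_subst_shearSubst_neg (-c) d f)

theorem shear_X_zero (c : R) (d : ℕ) : shear c d (X 0) = X 0 + C c * X 1 ^ (d + 1) := by
  simp [shear, subst_shearSubst_X_zero]

theorem shear_X_one (c : R) (d : ℕ) : shear c d (X 1) = X 1 := by
  simp [shear, subst_shearSubst_X_one]

theorem prime_X_zero_add_C_mul_X_one_pow [IsDomain R] (c : R) (d : ℕ) :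
    Prime (X 0 + C c * X 1 ^ (d + 1) : MvPowerSeries (Fin 2) R) := by
  rw [← shear_X_zero, MulEquiv.prime_iff]
  exact X_prime 0

theorem finrank_quotient_span_X_zero_add_C_mul_X_one_pow {K : Type*} [Field K] (c : K)
    (d m : ℕ) :
    Module.finrank K (MvPowerSeries (Fin 2) K ⧸
      Ideal.span {X 0 + C c * X 1 ^ (d + 1), (X 1 : MvPowerSeries (Fin 2) K) ^ m}) = m := by
  have hmap : Ideal.span {X 0 + C c * X 1 ^ (d + 1), (X 1 : MvPowerSeries (Fin 2) K) ^ m} =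
      (Ideal.span {X 0, X 1 ^ m}).map (shear c d) := by
    rw [Ideal.map_span, Set.image_pair, map_pow, shear_X_zero, shear_X_one]
  rw [← (Ideal.quotientEquivAlg _ _ (shear c d) hmap).toLinearEquiv.finrank_eq]
  exact finrank_quotient_span_X_X_pow (by decide) m

theorem span_X_zero_add_C_mul_X_one_pow_X_one_mul {c : R} (hc : IsUnit (2 * c)) (d : ℕ) :
    Ideal.span {(X 0 + C c * X 1 ^ (d + 1) : MvPowerSeries (Fin 2) R),
      X 1 * (X 0 + C (-c) * X 1 ^ (d + 1))} =
    Ideal.span {X 0 + C c * X 1 ^ (d + 1), X 1 ^ (d + 2)} := by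
  have h : X 1 * (X 0 + C (-c) * X 1 ^ (d + 1)) =
      C (-(2 * c)) * X 1 ^ (d + 2) +
        X 1 * (X 0 + C c * X 1 ^ (d + 1) : MvPowerSeries (Fin 2) R) := by
    simp only [map_neg, map_mul, map_ofNat]
    ring
  rw [h, Ideal.span_pair_add_mul_left, Ideal.span_insert, Ideal.span_insert,
    Ideal.span_singleton_mul_left_unit (hc.neg.map C)]

end MvPowerSeries

/-- Theorem 3.14(2), case `D⁻_{2k}`: if `l·n = Y·(X² − Y^{2k−2})` in `ℂ⟦X,Y⟧`
with `l, n` vanishing at the origin, then `dim_ℂ ℂ⟦X,Y⟧/⟨l,n⟩` equals `2` or `k`. -/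
theorem stmt8 (k : ℕ) (hk : 2 ≤ k)
    (l n : MvPowerSeries (Fin 2) ℂ)
    (hl : constantCoeff l = 0)
    (hn : constantCoeff n = 0)
    (hln : l * n = X 1 * ((X 0) ^ 2 - (X 1) ^ (2 * k - 2))) :
    Module.finrank ℂ (MvPowerSeries (Fin 2) ℂ ⧸ Ideal.span {l, n}) = 2 ∨
    Module.finrank ℂ (MvPowerSeries (Fin 2) ℂ ⧸ Ideal.span {l, n}) = k := by
  obtain ⟨d, rfl⟩ : ∃ d, k = d + 2 := ⟨k - 2, by omega⟩
  have hfac : l * n = X 1 * ((X 0 + C (-1) * X 1 ^ (d + 1)) * (X 0 + C 1 * X 1 ^ (d + 1))) := by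
    rw [hln, show 2 * (d + 2) - 2 = 2 * (d + 1) by omega, map_neg, map_one]
    ring
  have not_isUnit (f : MvPowerSeries (Fin 2) ℂ) (hf : constantCoeff f = 0) : ¬IsUnit f := by
    rw [isUnit_iff_constantCoeff, hf]
    exact not_isUnit_zero
  have hY : Prime (X 1 : MvPowerSeries (Fin 2) ℂ) := X_prime 1
  rcases Ideal.span_pair_eq_of_mul_eq_prime_mul_prime_mul_irreducible hY
      (prime_X_zero_add_C_mul_X_one_pow (-1) d) (prime_X_zero_add_C_mul_X_one_pow 1 d).irreducible
      (not_isUnit l hl) (not_isUnit n hn) hfac with h | h | h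
  · left
    have hsq : (X 0 + C (-1) * X 1 ^ (d + 1)) * (X 0 + C 1 * X 1 ^ (d + 1)) =
        X 0 ^ 2 + -X 1 ^ (2 * d + 1) * (X 1 : MvPowerSeries (Fin 2) ℂ) := by
      rw [map_neg, map_one]
      ring
    rw [h, hsq, Ideal.span_pair_add_mul_left, finrank_quotient_span_X_X_pow (by decide) 2]
  · right
    have hspan := span_X_zero_add_C_mul_X_one_pow_X_one_mul (c := (-1 : ℂ)) (by norm_num) d
    rw [neg_neg] at hspan
    rw [h, hspan, finrank_quotient_span_X_zero_add_C_mul_X_one_pow]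
  · right
    rw [h, span_X_zero_add_C_mul_X_one_pow_X_one_mul (by norm_num) d,
      finrank_quotient_span_X_zero_add_C_mul_X_one_pow]
end
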